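/- Let (X̃, d) be a metric space with dₛ, dᵤ as above, F̃ : X̃ → X̃ a bijection, λ > 1, with dᵤ(F̃x,F̃y) ≥ λ dᵤ(x,y) and dₛ(F̃⁻¹x,F̃⁻¹y) ≥ λ dₛ(x,y), and dₛ, dᵤ separating points. If sup_{k∈ℤ} d(F̃ᵏx₁, F̃ᵏx₂) < ∞ then x₁ = x₂. -/

import Mathlib

/-!
Forward iteration multiplies `du x₁ x₂` by at least `λⁿ` and backward iteration multiplies
`ds x₁ x₂` by at least `λⁿ`. Both quantities are dominated by `dist`, which stays bounded along
the orbit pair, so neither can be positive, and `ds`, `du` separate points.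
-/

lemma pow_mul_le_iterate_of_expanding {α : Type*} {f : α → α} {g : α → α → ℝ} {c : ℝ}
    (hc : 0 ≤ c) (hf : ∀ x y, c * g x y ≤ g (f x) (f y)) (n : ℕ) (x y : α) :
    c ^ n * g x y ≤ g (f^[n] x) (f^[n] y) := by
  induction n generalizing x y with
  | zero => simp
  | succ n ih =>
    calc c ^ (n + 1) * g x y = c ^ n * (c * g x y) := by ring
      _ ≤ c ^ n * g (f x) (f y) := mul_le_mul_of_nonneg_left (hf x y) (pow_nonneg hc n)
      _ ≤ g (f^[n + 1] x) (f^[n + 1] y) := ih (f x) (f y)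

lemma eq_zero_of_forall_pow_mul_le {c a B : ℝ} (hc : 1 < c) (ha : 0 ≤ a)
    (h : ∀ n : ℕ, c ^ n * a ≤ B) : a = 0 := by
  by_contra hne
  have ha' : 0 < a := ha.lt_of_ne' hne
  obtain ⟨n, hn⟩ := pow_unbounded_of_one_lt (B / a) hc
  rw [div_lt_iff₀ ha'] at hn
  linarith [h n]

lemma le_sqrt_sq_add_sq_left (a b : ℝ) : a ≤ Real.sqrt (a ^ 2 + b ^ 2) :=
  (le_abs_self a).trans (Real.abs_le_sqrt (le_add_of_nonneg_right (sq_nonneg b)))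

lemma le_sqrt_sq_add_sq_right (a b : ℝ) : b ≤ Real.sqrt (a ^ 2 + b ^ 2) :=
  add_comm (b ^ 2) (a ^ 2) ▸ le_sqrt_sq_add_sq_left b a

theorem self_shadowing_trivial {X : Type*} [MetricSpace X]
    (F : Equiv.Perm X) (ds du : X → X → ℝ)
    (hds : ∀ x y, 0 ≤ ds x y) (hdu : ∀ x y, 0 ≤ du x y)
    (hd : ∀ x y : X, dist x y = Real.sqrt ((ds x y) ^ 2 + (du x y) ^ 2))
    (lam : ℝ) (hlam : 1 < lam)
    (hu : ∀ x y : X, lam * du x y ≤ du (F x) (F y))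
    (hs : ∀ x y : X, lam * ds x y ≤ ds (F⁻¹ x) (F⁻¹ y))
    (hsep : ∀ x y : X, ds x y = 0 → du x y = 0 → x = y)
    (x₁ x₂ : X)
    (hbdd : ∃ B : ℝ, ∀ k : ℤ, dist ((F ^ k) x₁) ((F ^ k) x₂) ≤ B) :
    x₁ = x₂ := by
  obtain ⟨B, hB⟩ := hbdd
  have hlam0 : 0 ≤ lam := zero_le_one.trans hlam.le
  have hdu0 : du x₁ x₂ = 0 := eq_zero_of_forall_pow_mul_le hlam (hdu x₁ x₂) fun n => by
    have hBn := hB n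
    rw [zpow_natCast, Equiv.Perm.coe_pow, hd] at hBn
    exact (pow_mul_le_iterate_of_expanding hlam0 hu n x₁ x₂).trans
      ((le_sqrt_sq_add_sq_right _ _).trans hBn)
  have hds0 : ds x₁ x₂ = 0 := eq_zero_of_forall_pow_mul_le hlam (hds x₁ x₂) fun n => by
    have hBn := hB (-n)
    rw [zpow_neg, zpow_natCast, ← inv_pow, Equiv.Perm.coe_pow, hd] at hBn
    exact (pow_mul_le_iterate_of_expanding hlam0 hs n x₁ x₂).trans
      ((le_sqrt_sq_add_sq_left _ _).trans hBn)
  exact hsep x₁ x₂ hds0 hdu0
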